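/- arXiv:2309.08125 — 2 statements merged into one kernel-verified Lean document; each statement's English description precedes it below -/
import Mathlib

section
/- For an arithmetic sequence a_i = a + d·i (i = 0,...,p-1) with gcd(a, d) = 1 and a ≥ 2, every integer greater than (⌊(a-2)/(p-1)⌋)·a + d(a-1) is representable as a nonnegative integer combination of a_0, ..., a_{p-1}. -/
/-!
Write `m = a * k + s * d` with `0 ≤ s < a`, which is possible once `m ≥ d * (a - 1)` since
`gcd(a, d) = 1`. Splitting `s` into `k` parts of size at most `p - 1` writes `m` as a sum of `k`
terms `a + d * j` with `j < p`, so it suffices that `s ≤ (p - 1) * k`. The bound on `m` forces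
`k ≥ ⌊(a - 2)/(p - 1)⌋ + 1`, and `(p - 1) * (⌊(a - 2)/(p - 1)⌋ + 1) ≥ a - 1 ≥ s`.
-/

open Finset

def arithProgSemigroup (a d p : ℕ) : AddSubmonoid ℕ :=
  AddSubmonoid.closure (Set.range fun i : Fin p => a + d * i)

section arithProgSemigroup

variable {a d p : ℕ}

lemma add_mul_mem_arithProgSemigroup {i : ℕ} (hi : i < p) :
    a + d * i ∈ arithProgSemigroup a d p :=
  AddSubmonoid.subset_closure ⟨⟨i, hi⟩, rfl⟩

lemma mul_add_mul_mem_arithProgSemigroup (hp : 0 < p) {k s : ℕ} (hs : s ≤ (p - 1) * k) :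
    a * k + s * d ∈ arithProgSemigroup a d p := by
  induction k generalizing s with
  | zero => simp_all
  | succ k ih =>
    obtain ⟨t, j, ht, hj, rfl⟩ : ∃ t j, t ≤ (p - 1) * k ∧ j < p ∧ s = t + j := by
      rw [mul_add_one] at hs
      exact ⟨s - min s (p - 1), min s (p - 1), by omega, by omega, by omega⟩
    convert add_mem (ih ht) (add_mul_mem_arithProgSemigroup (a := a) (d := d) hj) using 1
    ring

lemma exists_eq_sum_range_of_mem_arithProgSemigroup {m : ℕ}
    (hm : m ∈ arithProgSemigroup a d p) :
    ∃ x : ℕ → ℕ, m = ∑ i ∈ range p, x i * (a + d * i) := by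
  obtain ⟨c, rfl⟩ := AddSubmonoid.exists_of_mem_closure_range _ _ hm
  refine ⟨fun i => if h : i < p then c ⟨i, h⟩ else 0, ?_⟩
  rw [← Fin.sum_univ_eq_sum_range]
  simp

end arithProgSemigroup

lemma Nat.exists_eq_mul_add_mul_of_coprime {a d m : ℕ} (hcop : Nat.Coprime a d) (ha : 0 < a)
    (hm : d * (a - 1) ≤ m) : ∃ k, ∃ s < a, m = a * k + s * d := by
  obtain ⟨b, t, rfl⟩ := Nat.exists_add_mul_eq_of_gcd_dvd_of_mul_pred_le a d m
    (by simp [hcop.gcd_eq_one])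
    ((Nat.mul_le_mul_left _ (Nat.pred_le d)).trans (by rwa [mul_comm]))
  refine ⟨b + d * (t / a), t % a, Nat.mod_lt _ ha, ?_⟩
  conv_lhs => rw [← Nat.div_add_mod t a]
  ring

/-- Roberts' theorem (representability direction): for the arithmetic sequence
`a, a+d, ..., a+(p-1)d` with `gcd(a,d) = 1` and `a ≥ 2`, every integer greater
than `⌊(a-2)/(p-1)⌋·a + d·(a-1)` is a nonnegative integer combination of the terms. -/
theorem roberts_representable (a d p : ℕ) (ha : 2 ≤ a) (hp : 2 ≤ p)
    (hgcd : Nat.gcd a d = 1) :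
    ∀ m : ℕ, ((a - 2) / (p - 1)) * a + d * (a - 1) < m →
      ∃ x : ℕ → ℕ, m = ∑ i ∈ Finset.range p, x i * (a + d * i) := by
  intro m hm
  set q := (a - 2) / (p - 1)
  obtain ⟨k, s, hs, rfl⟩ :=
    Nat.exists_eq_mul_add_mul_of_coprime (m := m) hgcd (by omega) (by omega)
  have hsd : s * d ≤ d * (a - 1) := by rw [mul_comm]; exact Nat.mul_le_mul_left _ (by omega)
  have hqk : q < k := Nat.lt_of_mul_lt_mul_left (a := a) (by linarith)
  have hsk : s ≤ (p - 1) * k :=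
    have hq : a - 2 < (p - 1) * (q + 1) := Nat.lt_mul_div_succ _ (by omega)
    calc s ≤ (p - 1) * (q + 1) := by omega
      _ ≤ (p - 1) * k := Nat.mul_le_mul_left _ hqk
  exact exists_eq_sum_range_of_mem_arithProgSemigroup
    (mul_add_mul_mem_arithProgSemigroup (by omega) hsk)
end

section
/- If p consecutive integers n_0, n_0+1, ..., n_0+p-1 with p ≥ n_0 ≥ 1 are available sizes, then for any N' ≥ (f+1)·n_0 with f ≥ 0, there exists a representation N' = Σ x_i·n_i with nonnegative integers x_i such that Σ x_i ≥ f+1. -/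
/-!
Write `N = m·n₀ + r` with `m = N / n₀ ≥ f + 1` and `r < n₀ ≤ p`. Then
`N = (m - 1)·n₀ + (n₀ + r)`: `m - 1` pipelines of the smallest size `n₀` and one of size
`n₀ + r`, which is available because `r < p`. That makes `m` pipelines in total.
-/

open Finset

lemma sum_range_pi_single_mul {p j : ℕ} (hj : j < p) (a : ℕ) (g : ℕ → ℕ) :
    ∑ i ∈ range p, (Pi.single j a : ℕ → ℕ) i * g i = a * g j := by
  rw [sum_eq_single_of_mem j (mem_range.mpr hj) fun i _ hi => by simp [hi]]
  simp

lemma sum_range_two_singles_mul {p j k : ℕ} (hj : j < p) (hk : k < p) (a b : ℕ)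
    (g : ℕ → ℕ) :
    ∑ i ∈ range p, (Pi.single j a + Pi.single k b : ℕ → ℕ) i * g i = a * g j + b * g k := by
  simp only [Pi.add_apply, add_mul, sum_add_distrib, sum_range_pi_single_mul hj,
    sum_range_pi_single_mul hk]

lemma exists_consecutive_sizes_repr_card_eq_div {n0 p N : ℕ} (hn0 : 0 < n0) (hp : n0 ≤ p)
    (hN : n0 ≤ N) :
    ∃ x : ℕ → ℕ, N = ∑ i ∈ range p, x i * (n0 + i) ∧ ∑ i ∈ range p, x i = N / n0 := by
  have hm : 0 < N / n0 := Nat.div_pos hN hn0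
  have hr : N % n0 < p := (Nat.mod_lt N hn0).trans_le hp
  refine ⟨Pi.single 0 (N / n0 - 1) + Pi.single (N % n0) 1, ?_, ?_⟩
  · rw [sum_range_two_singles_mul (hn0.trans_le hp) hr, add_zero, one_mul, ← add_assoc,
      ← add_one_mul, Nat.sub_one_add_one hm.ne', Nat.div_add_mod']
  · simpa [Nat.sub_add_cancel hm] using
      sum_range_two_singles_mul (hn0.trans_le hp) hr (N / n0 - 1) 1 fun _ => 1

/-- Strengthened coverage: with consecutive sizes `n0, ..., n0+p-1`, `p ≥ n0 ≥ 1`,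
every `N ≥ (f+1)·n0` has a representation `N = ∑ xᵢ·(n0+i)` using at least
`f+1` pipelines. -/
theorem coverage_with_replicas (n0 p f : ℕ) (h1 : 1 ≤ n0) (hp : n0 ≤ p) :
    ∀ N : ℕ, (f + 1) * n0 ≤ N →
      ∃ x : ℕ → ℕ, N = ∑ i ∈ Finset.range p, x i * (n0 + i) ∧
        f + 1 ≤ ∑ i ∈ Finset.range p, x i := by
  intro N hN
  have hN0 : n0 ≤ N := (Nat.le_mul_of_pos_left n0 f.succ_pos).trans hN
  obtain ⟨x, hsum, hcard⟩ := exists_consecutive_sizes_repr_card_eq_div h1 hp hN0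
  exact ⟨x, hsum, hcard ▸ (Nat.le_div_iff_mul_le h1).mpr hN⟩
end
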